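/- arXiv:2110.13137 — 3 statements merged into one kernel-verified Lean document; each statement's English description precedes it below -/
import Mathlib

section
/- Let α and β be unit simple l-vectors in ℝᵐ with dual l-covectors α* and β*, and let λ, μ ∈ [-1,1]. Then the (n-j+l)-form Ψ = λ dx₁∧⋯∧dx_{n-j}∧α* + μ dy₁∧⋯∧dy_{n-j}∧β* on ℝ^{2(n-j)} × ℝᵐ has comass at most 1, i.e., Ψ(ξ) ≤ 1 for every unit simple (n-j+l)-vector ξ. -/
open Finset Real

private lemma sum_sq_eq_norm_sq {p : ℕ} (x : EuclideanSpace ℝ (Fin p)) :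
    ∑ i, x i ^ 2 = ‖x‖ ^ 2 := by
  rw [← real_inner_self_eq_norm_sq]
  simp only [PiLp.inner_apply, RCLike.inner_apply, conj_trivial, sq]

private lemma bessel {ι E : Type*} [Fintype ι] [NormedAddCommGroup E]
    [InnerProductSpace ℝ E] {f : ι → E} (hf : Orthonormal ℝ f) (x : E) :
    ∑ i, (inner ℝ (f i) x : ℝ) ^ 2 ≤ ‖x‖ ^ 2 := by
  have h := hf.sum_inner_products_le (𝕜 := ℝ) (s := Finset.univ) (x := x)
  simpa [Real.norm_eq_abs, sq_abs] using h

private lemma det_sq_le_prod_row {N : ℕ} (M : Matrix (Fin N) (Fin N) ℝ) :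
    M.det ^ 2 ≤ ∏ i, ∑ j, M i j ^ 2 := by
  classical
  haveI : WellFoundedLT (Fin N) := inferInstance
  
  let f : Fin N → EuclideanSpace ℝ (Fin N) := fun i => (WithLp.equiv 2 (Fin N → ℝ)).symm (M i)
  have hcard : Module.finrank ℝ (EuclideanSpace ℝ (Fin N)) = Fintype.card (Fin N) := finrank_euclideanSpace
  let b : OrthonormalBasis (Fin N) ℝ (EuclideanSpace ℝ (Fin N)) := InnerProductSpace.gramSchmidtOrthonormalBasis hcard f
  have hdet1 : b.toBasis.det f = ∏ i, (inner ℝ (b i) (f i) : ℝ) :=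
    InnerProductSpace.gramSchmidtOrthonormalBasis_det hcard f
  let e : OrthonormalBasis (Fin N) ℝ (EuclideanSpace ℝ (Fin N)) := EuclideanSpace.basisFun (Fin N) ℝ
  have hmat : e.toBasis.toMatrix f = M.transpose := by
    ext i j
    simp [Module.Basis.toMatrix_apply, e, f, Matrix.transpose_apply]
  have hsplit : e.toBasis.toMatrix f = e.toBasis.toMatrix b.toBasis * b.toBasis.toMatrix f :=
    (Module.Basis.toMatrix_mul_toMatrix e.toBasis b.toBasis f).symm
  have hMdet : M.det = (e.toBasis.det b.toBasis) * (b.toBasis.det f) := by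
    rw [Module.Basis.det_apply, Module.Basis.det_apply, ← Matrix.det_mul, ← hsplit, hmat, Matrix.det_transpose]
  have hone : (e.toBasis.det b.toBasis) ^ 2 = 1 := by
    have h := e.det_to_matrix_orthonormalBasis_real b
    rw [show (⇑b.toBasis : Fin N → EuclideanSpace ℝ (Fin N)) = ⇑b from b.coe_toBasis] at *
    rcases h with h | h <;> rw [h] <;> norm_num
  have h2 : M.det ^ 2 = ∏ i, (inner ℝ (b i) (f i) : ℝ) ^ 2 := by
    rw [hMdet, mul_pow, hone, one_mul, hdet1, Finset.prod_pow]
  rw [h2]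
  apply Finset.prod_le_prod (fun i _ => sq_nonneg _)
  intro i _
  have hcs := real_inner_mul_inner_self_le (b i) (f i)
  have hb : (inner ℝ (b i) (b i) : ℝ) = 1 := by
    rw [real_inner_self_eq_norm_sq, b.orthonormal.1 i]; norm_num
  have hf2 : (inner ℝ (f i) (f i) : ℝ) = ∑ j, M i j ^ 2 := by
    rw [real_inner_self_eq_norm_sq, ← sum_sq_eq_norm_sq]; rfl
  calc (inner ℝ (b i) (f i) : ℝ) ^ 2 = inner ℝ (b i) (f i) * inner ℝ (b i) (f i) := sq _
    _ ≤ (inner ℝ (b i) (b i) : ℝ) * inner ℝ (f i) (f i) := hcs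
    _ = ∑ j, M i j ^ 2 := by rw [hb, hf2, one_mul]

private lemma prod_le_exp {ι : Type*} (s : Finset ι) (f : ι → ℝ) (hf : ∀ i ∈ s, 0 ≤ f i) :
    ∏ i ∈ s, f i ≤ Real.exp (∑ i ∈ s, (f i - 1)) := by
  rw [Real.exp_sum]
  exact Finset.prod_le_prod hf (fun i _ => by linarith [Real.add_one_le_exp (f i - 1)])



/-- The wedge product of `1`-covectors, evaluated on a family of vectors via the usual
determinant formula: `(c₁∧⋯∧c_k∧d₁∧⋯∧d_l)(v₁,…,v_{k+l}) = det (pairings)`. -/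
noncomputable def wedgeDet {E : Type*} {k l : ℕ}
    (c : Fin k → E → ℝ) (d : Fin l → E → ℝ) (v : Fin (k + l) → E) : ℝ :=
  Matrix.det (Matrix.of fun i a => Fin.addCases (fun i' => c i' (v a)) (fun b => d b (v a)) i)

/-- The torus differential form `Ψ(α,β,λ,μ)` on `ℝ^{2(n-j)} × ℝᵐ`: here the ambient space
is `ℝ^{(n-j)+(n-j)+m}`, the `x`-coordinates are the first block, the `y`-coordinates the
second block, and the unit simple `l`-vectors `α`, `β` in `ℝᵐ` are given by orthonormal
families `u`, `w`, with dual covectors evaluated by pairing in the last block. -/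
noncomputable def torusForm (k l m : ℕ) (u w : Fin l → EuclideanSpace ℝ (Fin m))
    (lam mu : ℝ)
    (v : Fin (k + l) → EuclideanSpace ℝ (Fin (k + k + m))) : ℝ :=
  lam * wedgeDet (fun i p => p (Fin.castAdd m (Fin.castAdd k i)))
      (fun b p => ∑ r, p (Fin.natAdd (k + k) r) * u b r) v
  + mu * wedgeDet (fun i p => p (Fin.castAdd m (Fin.natAdd k i)))
      (fun b p => ∑ r, p (Fin.natAdd (k + k) r) * w b r) v

private lemma wedgeDet_sq_le {E : Type*} {k l : ℕ} (c : Fin k → E → ℝ) (d : Fin l → E → ℝ)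
    (v : Fin (k + l) → E) :
    wedgeDet c d v ^ 2 ≤ (∏ i, ∑ a, c i (v a) ^ 2) * ∏ b, ∑ a, d b (v a) ^ 2 := by
  have h := det_sq_le_prod_row (Matrix.of fun i a =>
    Fin.addCases (fun i' => c i' (v a)) (fun b => d b (v a)) i)
  unfold wedgeDet
  refine le_trans h (le_of_eq ?_)
  rw [Fin.prod_univ_add]
  congr 1
  · exact Finset.prod_congr rfl fun i _ => Finset.sum_congr rfl fun a _ => by simp
  · exact Finset.prod_congr rfl fun b _ => Finset.sum_congr rfl fun a _ => by simp

set_option maxHeartbeats 2000000 in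
private lemma key (k l m : ℕ) (hk : 2 ≤ k)
    (u w : Fin l → EuclideanSpace ℝ (Fin m)) (hu : Orthonormal ℝ u) (hw : Orthonormal ℝ w)
    (lam mu : ℝ) (hlam : -1 ≤ lam ∧ lam ≤ 1) (hmu : -1 ≤ mu ∧ mu ≤ 1)
    (v : Fin (k + l) → EuclideanSpace ℝ (Fin (k + k + m))) (hv : Orthonormal ℝ v) :
    torusForm k l m u w lam mu v ≤ 1 := by
  classical
  set X : Fin k → Fin (k + k + m) := fun i => Fin.castAdd m (Fin.castAdd k i) with hX
  set Y : Fin k → Fin (k + k + m) := fun i => Fin.castAdd m (Fin.natAdd k i) with hY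
  set Z : Fin m → Fin (k + k + m) := fun r => Fin.natAdd (k + k) r with hZ
  set p : Fin k → ℝ := fun i => ∑ a, v a (X i) ^ 2 with hp
  set q : Fin k → ℝ := fun i => ∑ a, v a (Y i) ^ 2 with hq
  set zz : Fin m → ℝ := fun r => ∑ a, v a (Z r) ^ 2 with hzz
  set tu : Fin l → ℝ := fun b => ∑ a, (∑ r, v a (Z r) * u b r) ^ 2 with htu
  set tw : Fin l → ℝ := fun b => ∑ a, (∑ r, v a (Z r) * w b r) ^ 2 with htw
  have hp0 : ∀ i, 0 ≤ p i := fun i => Finset.sum_nonneg fun a _ => sq_nonneg _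
  have hq0 : ∀ i, 0 ≤ q i := fun i => Finset.sum_nonneg fun a _ => sq_nonneg _
  have htu0 : ∀ b, 0 ≤ tu b := fun b => Finset.sum_nonneg fun a _ => sq_nonneg _
  have htw0 : ∀ b, 0 ≤ tw b := fun b => Finset.sum_nonneg fun a _ => sq_nonneg _
  -- Bessel bound for coordinate masses
  have coordBound : ∀ d : Fin (k + k + m), (∑ a, v a d ^ 2) ≤ 1 := by
    intro d
    have h := bessel hv (EuclideanSpace.single d (1 : ℝ))
    have h2 : ∀ a : Fin (k + l),
        (inner ℝ (v a) (EuclideanSpace.single d (1 : ℝ)) : ℝ) = v a d := by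
      intro a; rw [EuclideanSpace.inner_single_right]; simp
    rw [EuclideanSpace.norm_single] at h
    simp only [h2] at h
    simpa using h
  -- inner products against the embedded u, w vectors
  have hinner_emb : ∀ (g : Fin m → ℝ) (a : Fin (k + l)),
      (inner ℝ (v a) ((WithLp.equiv 2 (Fin (k + k + m) → ℝ)).symm
        (Fin.append (fun _ : Fin (k + k) => (0 : ℝ)) g)) : ℝ)
        = ∑ r, v a (Z r) * g r := by
    intro g a
    simp only [PiLp.inner_apply, RCLike.inner_apply, conj_trivial]
    rw [Fin.sum_univ_add]
    simp [Fin.append_left, Fin.append_right, hZ, mul_comm]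
  have hnorm_emb : ∀ g : EuclideanSpace ℝ (Fin m),
      ‖(WithLp.equiv 2 (Fin (k + k + m) → ℝ)).symm
        (Fin.append (fun _ : Fin (k + k) => (0 : ℝ)) (fun r => g r))‖ ^ 2 = ‖g‖ ^ 2 := by
    intro g
    rw [← sum_sq_eq_norm_sq, ← sum_sq_eq_norm_sq]
    rw [Fin.sum_univ_add]
    simp [Fin.append_left, Fin.append_right]
  have htu1 : ∀ b, tu b ≤ 1 := by
    intro b
    have h := bessel hv ((WithLp.equiv 2 (Fin (k + k + m) → ℝ)).symm
      (Fin.append (fun _ : Fin (k + k) => (0 : ℝ)) (fun r => u b r)))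
    rw [hnorm_emb (u b)] at h
    simp only [hinner_emb] at h
    have hn : ‖u b‖ ^ 2 = 1 := by rw [hu.1 b]; norm_num
    rw [hn] at h
    exact h
  have htw1 : ∀ b, tw b ≤ 1 := by
    intro b
    have h := bessel hv ((WithLp.equiv 2 (Fin (k + k + m) → ℝ)).symm
      (Fin.append (fun _ : Fin (k + k) => (0 : ℝ)) (fun r => w b r)))
    rw [hnorm_emb (w b)] at h
    simp only [hinner_emb] at h
    have hn : ‖w b‖ ^ 2 = 1 := by rw [hw.1 b]; norm_num
    rw [hn] at h
    exact h
  -- per-vector Bessel inside the z-block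
  have hper : ∀ (g : Fin l → EuclideanSpace ℝ (Fin m)), Orthonormal ℝ g → ∀ a : Fin (k + l),
      ∑ b, (∑ r, v a (Z r) * g b r) ^ 2 ≤ ∑ r, v a (Z r) ^ 2 := by
    intro g hg a
    have h := bessel hg ((WithLp.equiv 2 (Fin m → ℝ)).symm (fun r => v a (Z r)))
    have h2 : ∀ b, (inner ℝ (g b) ((WithLp.equiv 2 (Fin m → ℝ)).symm
        (fun r => v a (Z r))) : ℝ) = ∑ r, v a (Z r) * g b r := by
      intro b
      simp only [PiLp.inner_apply, RCLike.inner_apply, conj_trivial]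
      exact Finset.sum_congr rfl fun r _ => by simp [mul_comm]
    simp only [h2] at h
    rw [← sum_sq_eq_norm_sq] at h
    exact h
  have hTuT : ∑ b, tu b ≤ ∑ r, zz r := by
    simp only [htu, hzz]
    rw [Finset.sum_comm]
    exact le_trans (Finset.sum_le_sum fun a _ => hper u hu a) (le_of_eq Finset.sum_comm)
  have hTwT : ∑ b, tw b ≤ ∑ r, zz r := by
    simp only [htw, hzz]
    rw [Finset.sum_comm]
    exact le_trans (Finset.sum_le_sum fun a _ => hper w hw a) (le_of_eq Finset.sum_comm)
  -- the trace identity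
  have hsplitD : ∀ F : Fin (k + k + m) → ℝ,
      ∑ d, F d = ((∑ i, F (X i)) + ∑ i, F (Y i)) + ∑ r, F (Z r) := by
    intro F
    rw [Fin.sum_univ_add (f := fun d : Fin ((k + k) + m) => F d),
      Fin.sum_univ_add (f := fun c : Fin (k + k) => F (Fin.castAdd m c))]
  have hvnorm : ∀ a, ∑ d, v a d ^ 2 = 1 := by
    intro a
    rw [sum_sq_eq_norm_sq, hv.1 a]
    norm_num
  have htrace : ((∑ i, p i) + ∑ i, q i) + ∑ r, zz r = (k : ℝ) + l := by
    have h1 : ∑ d, ∑ a, v a d ^ 2 = ((∑ i, p i) + ∑ i, q i) + ∑ r, zz r :=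
      hsplitD fun d => ∑ a, v a d ^ 2
    rw [← h1, Finset.sum_comm]
    simp only [hvnorm]
    simp [Finset.card_univ]
  -- the two determinants
  set A := wedgeDet (fun i p => p (Fin.castAdd m (Fin.castAdd k i)))
      (fun b p => ∑ r, p (Fin.natAdd (k + k) r) * u b r) v with hA
  set B := wedgeDet (fun i p => p (Fin.castAdd m (Fin.natAdd k i)))
      (fun b p => ∑ r, p (Fin.natAdd (k + k) r) * w b r) v with hB
  have hgoal : torusForm k l m u w lam mu v = lam * A + mu * B := rfl
  have hA2 : A ^ 2 ≤ (∏ i, p i) * ∏ b, tu b := by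
    rw [hA]
    refine le_trans (wedgeDet_sq_le _ _ v) (le_of_eq ?_)
    simp only [hp, htu, hX, hZ]
  have hB2 : B ^ 2 ≤ (∏ i, q i) * ∏ b, tw b := by
    rw [hB]
    refine le_trans (wedgeDet_sq_le _ _ v) (le_of_eq ?_)
    simp only [hq, htw, hY, hZ]
  -- two distinguished x-rows (here k ≥ 2 is used)
  have hk0 : 0 < k := by omega
  have hk1 : 1 < k := by omega
  set i0 : Fin k := ⟨0, hk0⟩ with hi0
  set i1 : Fin k := ⟨1, hk1⟩ with hi1
  have hne : i0 ≠ i1 := by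
    simp [hi0, hi1, Fin.ext_iff]
  have h1mem : i1 ∈ (Finset.univ : Finset (Fin k)).erase i0 :=
    Finset.mem_erase.mpr ⟨hne.symm, Finset.mem_univ _⟩
  have hsplit_prod : ∀ f : Fin k → ℝ, (∀ i, 0 ≤ f i) →
      ∏ i, f i ≤ f i0 * f i1 *
        Real.exp ((∑ i, (f i - 1)) - (f i0 - 1) - (f i1 - 1)) := by
    intro f hf
    have e1 := (Finset.mul_prod_erase Finset.univ f (Finset.mem_univ i0)).symm
    have e2 := (Finset.mul_prod_erase (Finset.univ.erase i0) f h1mem).symm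
    have e3 := (Finset.add_sum_erase Finset.univ (fun i => f i - 1) (Finset.mem_univ i0)).symm
    have e4 := (Finset.add_sum_erase (Finset.univ.erase i0) (fun i => f i - 1) h1mem).symm
    have e5 : ∏ i ∈ (Finset.univ.erase i0).erase i1, f i ≤
        Real.exp (∑ i ∈ (Finset.univ.erase i0).erase i1, (f i - 1)) :=
      prod_le_exp _ f fun i _ => hf i
    have heq : (∑ i, (f i - 1)) - (f i0 - 1) - (f i1 - 1)
        = ∑ i ∈ (Finset.univ.erase i0).erase i1, (f i - 1) := by
      rw [e3, e4]; ring
    rw [e1, e2, ← mul_assoc, heq]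
    exact mul_le_mul_of_nonneg_left e5 (mul_nonneg (hf i0) (hf i1))
  have hsubk : ∀ f : Fin k → ℝ, ∑ i, (f i - 1) = (∑ i, f i) - k := by
    intro f; rw [Finset.sum_sub_distrib]; simp [Finset.card_univ]
  have hsubl : ∀ f : Fin l → ℝ, ∑ b, (f b - 1) = (∑ b, f b) - l := by
    intro f; rw [Finset.sum_sub_distrib]; simp [Finset.card_univ]
  have hPp : p i0 + p i1 ≤ ∑ i, p i := by
    have h := Finset.sum_le_sum_of_subset_of_nonneg
      (Finset.subset_univ ({i0, i1} : Finset (Fin k))) (fun i _ _ => hp0 i)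
    rwa [Finset.sum_pair hne] at h
  have hQq : q i0 + q i1 ≤ ∑ i, q i := by
    have h := Finset.sum_le_sum_of_subset_of_nonneg
      (Finset.subset_univ ({i0, i1} : Finset (Fin k))) (fun i _ _ => hq0 i)
    rwa [Finset.sum_pair hne] at h
  -- bound |A|
  have hAb : |A| ≤ (p i0 + p i1) / 2 *
      Real.exp ((2 - (p i0 + p i1 + q i0 + q i1)) / 2) := by
    have h1 : A ^ 2 ≤ (p i0 * p i1) *
        Real.exp (((∑ i, (p i - 1)) - (p i0 - 1) - (p i1 - 1)) + ∑ b, (tu b - 1)) := by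
      have h2 := hsplit_prod p hp0
      have h3 := prod_le_exp Finset.univ tu (fun b _ => htu0 b)
      have h4 := mul_le_mul h2 h3 (Finset.prod_nonneg fun b _ => htu0 b)
        (mul_nonneg (mul_nonneg (hp0 i0) (hp0 i1)) (Real.exp_pos _).le)
      rw [mul_assoc, ← Real.exp_add] at h4
      exact le_trans hA2 h4
    have hexp : ((∑ i, (p i - 1)) - (p i0 - 1) - (p i1 - 1)) + ∑ b, (tu b - 1)
        ≤ 2 - (p i0 + p i1 + q i0 + q i1) := by
      rw [hsubk p, hsubl tu]
      linarith [hTuT, htrace, hQq]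
    have h5 : A ^ 2 ≤ ((p i0 + p i1) / 2) ^ 2 *
        Real.exp (2 - (p i0 + p i1 + q i0 + q i1)) := by
      refine le_trans h1 (mul_le_mul ?_ (Real.exp_le_exp.mpr hexp) (Real.exp_pos _).le
        (by positivity))
      nlinarith [sq_nonneg (p i0 - p i1)]
    have h6 : ((p i0 + p i1) / 2 * Real.exp ((2 - (p i0 + p i1 + q i0 + q i1)) / 2)) ^ 2
        = ((p i0 + p i1) / 2) ^ 2 * Real.exp (2 - (p i0 + p i1 + q i0 + q i1)) := by
      rw [mul_pow]
      congr 1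
      rw [sq, ← Real.exp_add]
      congr 1
      ring
    have h7 : 0 ≤ (p i0 + p i1) / 2 * Real.exp ((2 - (p i0 + p i1 + q i0 + q i1)) / 2) :=
      mul_nonneg (by linarith [hp0 i0, hp0 i1]) (Real.exp_pos _).le
    calc |A| = Real.sqrt (A ^ 2) := (Real.sqrt_sq_eq_abs A).symm
      _ ≤ Real.sqrt (((p i0 + p i1) / 2 *
          Real.exp ((2 - (p i0 + p i1 + q i0 + q i1)) / 2)) ^ 2) :=
        Real.sqrt_le_sqrt (by rw [h6]; exact h5)
      _ = (p i0 + p i1) / 2 * Real.exp ((2 - (p i0 + p i1 + q i0 + q i1)) / 2) :=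
        by rw [Real.sqrt_sq h7]
  -- bound |B|
  have hBb : |B| ≤ (q i0 + q i1) / 2 *
      Real.exp ((2 - (p i0 + p i1 + q i0 + q i1)) / 2) := by
    have h1 : B ^ 2 ≤ (q i0 * q i1) *
        Real.exp (((∑ i, (q i - 1)) - (q i0 - 1) - (q i1 - 1)) + ∑ b, (tw b - 1)) := by
      have h2 := hsplit_prod q hq0
      have h3 := prod_le_exp Finset.univ tw (fun b _ => htw0 b)
      have h4 := mul_le_mul h2 h3 (Finset.prod_nonneg fun b _ => htw0 b)
        (mul_nonneg (mul_nonneg (hq0 i0) (hq0 i1)) (Real.exp_pos _).le)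
      rw [mul_assoc, ← Real.exp_add] at h4
      exact le_trans hB2 h4
    have hexp : ((∑ i, (q i - 1)) - (q i0 - 1) - (q i1 - 1)) + ∑ b, (tw b - 1)
        ≤ 2 - (p i0 + p i1 + q i0 + q i1) := by
      rw [hsubk q, hsubl tw]
      linarith [hTwT, htrace, hPp]
    have h5 : B ^ 2 ≤ ((q i0 + q i1) / 2) ^ 2 *
        Real.exp (2 - (p i0 + p i1 + q i0 + q i1)) := by
      refine le_trans h1 (mul_le_mul ?_ (Real.exp_le_exp.mpr hexp) (Real.exp_pos _).le
        (by positivity))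
      nlinarith [sq_nonneg (q i0 - q i1)]
    have h6 : ((q i0 + q i1) / 2 * Real.exp ((2 - (p i0 + p i1 + q i0 + q i1)) / 2)) ^ 2
        = ((q i0 + q i1) / 2) ^ 2 * Real.exp (2 - (p i0 + p i1 + q i0 + q i1)) := by
      rw [mul_pow]
      congr 1
      rw [sq, ← Real.exp_add]
      congr 1
      ring
    have h7 : 0 ≤ (q i0 + q i1) / 2 * Real.exp ((2 - (p i0 + p i1 + q i0 + q i1)) / 2) :=
      mul_nonneg (by linarith [hq0 i0, hq0 i1]) (Real.exp_pos _).le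
    calc |B| = Real.sqrt (B ^ 2) := (Real.sqrt_sq_eq_abs B).symm
      _ ≤ Real.sqrt (((q i0 + q i1) / 2 *
          Real.exp ((2 - (p i0 + p i1 + q i0 + q i1)) / 2)) ^ 2) :=
        Real.sqrt_le_sqrt (by rw [h6]; exact h5)
      _ = (q i0 + q i1) / 2 * Real.exp ((2 - (p i0 + p i1 + q i0 + q i1)) / 2) :=
        by rw [Real.sqrt_sq h7]
  -- endgame
  have hlamA : lam * A ≤ |A| := by
    calc lam * A ≤ |lam * A| := le_abs_self _
      _ = |lam| * |A| := abs_mul _ _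
      _ ≤ 1 * |A| := mul_le_mul_of_nonneg_right (abs_le.mpr hlam) (abs_nonneg _)
      _ = |A| := one_mul _
  have hmuB : mu * B ≤ |B| := by
    calc mu * B ≤ |mu * B| := le_abs_self _
      _ = |mu| * |B| := abs_mul _ _
      _ ≤ 1 * |B| := mul_le_mul_of_nonneg_right (abs_le.mpr hmu) (abs_nonneg _)
      _ = |B| := one_mul _
  have hfin : (p i0 + p i1) / 2 * Real.exp ((2 - (p i0 + p i1 + q i0 + q i1)) / 2)
      + (q i0 + q i1) / 2 * Real.exp ((2 - (p i0 + p i1 + q i0 + q i1)) / 2) ≤ 1 := by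
    have he := Real.add_one_le_exp ((p i0 + p i1 + q i0 + q i1) / 2 - 1)
    have hE : (0:ℝ) < Real.exp ((2 - (p i0 + p i1 + q i0 + q i1)) / 2) := Real.exp_pos _
    have h8 : ((p i0 + p i1 + q i0 + q i1) / 2) *
        Real.exp ((2 - (p i0 + p i1 + q i0 + q i1)) / 2)
        ≤ Real.exp ((p i0 + p i1 + q i0 + q i1) / 2 - 1) *
          Real.exp ((2 - (p i0 + p i1 + q i0 + q i1)) / 2) :=
      mul_le_mul_of_nonneg_right (by linarith) hE.le
    rw [← Real.exp_add] at h8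
    have h9 : Real.exp ((p i0 + p i1 + q i0 + q i1) / 2 - 1
        + (2 - (p i0 + p i1 + q i0 + q i1)) / 2) = 1 := by
      rw [show (p i0 + p i1 + q i0 + q i1) / 2 - 1
        + (2 - (p i0 + p i1 + q i0 + q i1)) / 2 = 0 by ring, Real.exp_zero]
    rw [h9] at h8
    have h10 : (p i0 + p i1) / 2 * Real.exp ((2 - (p i0 + p i1 + q i0 + q i1)) / 2)
        + (q i0 + q i1) / 2 * Real.exp ((2 - (p i0 + p i1 + q i0 + q i1)) / 2)
        = ((p i0 + p i1 + q i0 + q i1) / 2) *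
          Real.exp ((2 - (p i0 + p i1 + q i0 + q i1)) / 2) := by ring
    linarith
  rw [hgoal]
  linarith [hAb, hBb, hlamA, hmuB, hfin, abs_nonneg A, abs_nonneg B]


/-- For unit simple `l`-vectors `α, β` in `ℝᵐ` (given by orthonormal families `u, w`)
and `λ, μ ∈ [-1,1]`, the `(n-j+l)`-form
`Ψ = λ dx₁∧⋯∧dx_{n-j}∧α* + μ dy₁∧⋯∧dy_{n-j}∧β*` on `ℝ^{2(n-j)} × ℝᵐ` has comass at
most `1`: it is `≤ 1` on every unit simple `(n-j+l)`-vector, i.e. on every orthonormal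
family of `(n-j)+l` vectors. -/
theorem stmt_3 (n j l m : ℕ) (hj1 : 1 ≤ j) (hj2 : j ≤ n - 2) (hl : 1 ≤ l) (hlm : l ≤ m)
    (u w : Fin l → EuclideanSpace ℝ (Fin m))
    (hu : Orthonormal ℝ u) (hw : Orthonormal ℝ w)
    (lam mu : ℝ) (hlam : -1 ≤ lam ∧ lam ≤ 1) (hmu : -1 ≤ mu ∧ mu ≤ 1)
    (v : Fin ((n - j) + l) → EuclideanSpace ℝ (Fin ((n - j) + (n - j) + m)))
    (hv : Orthonormal ℝ v) :
    torusForm (n - j) l m u w lam mu v ≤ 1 := by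
  have hk : 2 ≤ n - j := by omega
  exact key (n - j) l m hk u w hu hw lam mu hlam hmu v hv
end

section
/- With Ψ(α,β,λ,μ) = λ dx₁∧⋯∧dx_{n-j}∧α* + μ dy₁∧⋯∧dy_{n-j}∧β* as above: if λ = 1 then Ψ evaluates to 1 on the unit simple vector ∂_{x₁}∧⋯∧∂_{x_{n-j}}∧α, and if μ = 1 then Ψ evaluates to 1 on ∂_{y₁}∧⋯∧∂_{y_{n-j}}∧β. If -1 < λ < 1 and -1 < μ < 1, then Ψ(ξ) < 1 for every unit simple (n-j+l)-vector ξ. -/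
/-- The simple `(k+l)`-vector `∂_{x₁}∧⋯∧∂_{x_k}∧α` (resp. `∂_{y₁}∧⋯∧∂_{y_k}∧β`),
given by the family consisting of the `x`- (resp. `y`-) coordinate vectors followed by
the orthonormal family spanning `α` (resp. `β`), included in the last block. -/
noncomputable def xPlane (k l m : ℕ) (u : Fin l → EuclideanSpace ℝ (Fin m)) :
    Fin (k + l) → EuclideanSpace ℝ (Fin (k + k + m)) :=
  Fin.addCases (fun i => EuclideanSpace.single (Fin.castAdd m (Fin.castAdd k i)) (1 : ℝ))
    (fun b => ∑ r, u b r • EuclideanSpace.single (Fin.natAdd (k + k) r) (1 : ℝ))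

noncomputable def yPlane (k l m : ℕ) (w : Fin l → EuclideanSpace ℝ (Fin m)) :
    Fin (k + l) → EuclideanSpace ℝ (Fin (k + k + m)) :=
  Fin.addCases (fun i => EuclideanSpace.single (Fin.castAdd m (Fin.natAdd k i)) (1 : ℝ))
    (fun b => ∑ r, w b r • EuclideanSpace.single (Fin.natAdd (k + k) r) (1 : ℝ))

namespace Stmt4Aux
open Matrix

variable {n : Type*} [Fintype n] [DecidableEq n]

lemma psd_det_nonneg {M : Matrix n n ℝ} (h : M.PosSemidef) : 0 ≤ M.det := by
  rw [h.isHermitian.det_eq_prod_eigenvalues]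
  exact Finset.prod_nonneg fun i _ => by simpa using h.eigenvalues_nonneg i

lemma eig_le_one {M : Matrix n n ℝ} (hM : M.IsHermitian) (h1 : (1 - M).PosSemidef) (i : n) :
    hM.eigenvalues i ≤ 1 := by
  set x : n → ℝ := ⇑(hM.eigenvectorBasis i) with hxdef
  have key : M *ᵥ x = hM.eigenvalues i • x := hM.mulVec_eigenvectorBasis i
  have hx : (0:ℝ) ≤ star x ⬝ᵥ ((1 - M) *ᵥ x) := h1.dotProduct_mulVec_nonneg x
  have hmv : (1 - M) *ᵥ x = (1 - hM.eigenvalues i) • x := by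
    rw [sub_mulVec, one_mulVec, key, sub_smul, one_smul]
  rw [hmv] at hx
  have hnorm : star x ⬝ᵥ x = 1 := by
    have h0 := hM.eigenvectorBasis.orthonormal.1 i
    rw [EuclideanSpace.norm_eq] at h0
    have h2 : ∑ j, (x j)^2 = 1 := by
      have := congrArg (fun t : ℝ => t^2) h0
      simpa [Real.sq_sqrt (Finset.sum_nonneg fun j _ => sq_nonneg ((hM.eigenvectorBasis i) j)),
        sq_abs] using this
    simpa [dotProduct, pow_two] using h2
  rw [dotProduct_smul, hnorm] at hx
  simp at hx; linarith

lemma det_one_sub_eq {M : Matrix n n ℝ} (hM : M.IsHermitian) :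
    (1 - M).det = ∏ i, (1 - hM.eigenvalues i) := by
  have hU1 : (hM.eigenvectorUnitary : Matrix n n ℝ) * (star hM.eigenvectorUnitary : Matrix n n ℝ) = 1 := by
    exact Matrix.mem_unitaryGroup_iff.mp hM.eigenvectorUnitary.2
  have hspec := hM.spectral_theorem
  rw [Unitary.conjStarAlgAut_apply] at hspec
  have h1 : (1 : Matrix n n ℝ) - M
      = (hM.eigenvectorUnitary : Matrix n n ℝ) * (1 - diagonal (RCLike.ofReal ∘ hM.eigenvalues))
        * (star hM.eigenvectorUnitary : Matrix n n ℝ) := by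
    rw [Matrix.mul_sub, Matrix.sub_mul, Matrix.mul_one, hU1, ← hspec]
  rw [h1, det_mul, det_mul]
  have hdet1 : det ((hM.eigenvectorUnitary : Matrix n n ℝ)) * det ((star hM.eigenvectorUnitary : Matrix n n ℝ)) = 1 := by
    rw [← det_mul, hU1, det_one]
  calc det ((hM.eigenvectorUnitary : Matrix n n ℝ)) * det (1 - diagonal (RCLike.ofReal ∘ hM.eigenvalues))
        * det ((star hM.eigenvectorUnitary : Matrix n n ℝ))
      = det (1 - diagonal (RCLike.ofReal ∘ hM.eigenvalues))
        * (det ((hM.eigenvectorUnitary : Matrix n n ℝ)) * det ((star hM.eigenvectorUnitary : Matrix n n ℝ))) := by ring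
    _ = det (1 - diagonal (RCLike.ofReal ∘ hM.eigenvalues)) := by rw [hdet1, mul_one]
    _ = ∏ i, (1 - hM.eigenvalues i) := by
        rw [← diagonal_one, diagonal_sub, det_diagonal]
        simp [RCLike.ofReal_real_eq_id]

/-- PSD with nonzero det is PosDef. -/
lemma psd_posDef_of_det_ne_zero {M : Matrix n n ℝ} (hM : M.PosSemidef) (hd : M.det ≠ 0) :
    M.PosDef := by
  exact hM.posDef_iff_det_ne_zero.mpr hd

/-- det of PSD matrix `⪯ 1` is at most 1. -/
lemma psd_det_le_one {M : Matrix n n ℝ} (hM : M.PosSemidef) (h1 : (1 - M).PosSemidef) :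
    M.det ≤ 1 := by
  rw [hM.isHermitian.det_eq_prod_eigenvalues]
  have := fun i => eig_le_one hM.isHermitian h1 i
  calc (∏ i, ((hM.isHermitian.eigenvalues i : ℝ)))
      ≤ 1 := Finset.prod_le_one (fun i _ => by simpa using hM.eigenvalues_nonneg i)
        (fun i _ => by simpa using this i)

/-- Monotonicity of determinant on PSD matrices. -/
lemma det_mono_psd {A B : Matrix n n ℝ} (hA : A.PosSemidef) (hBA : (B - A).PosSemidef) :
    A.det ≤ B.det := by
  have hB : B.PosSemidef := by simpa using hBA.add hA
  by_cases hd : B.det = 0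
  · obtain ⟨x, hx0, hxB⟩ := Matrix.exists_mulVec_eq_zero_iff.mpr hd
    have hdot : star x ⬝ᵥ (B *ᵥ x) = 0 := by rw [hxB, dotProduct_zero]
    have hsplit : star x ⬝ᵥ (A *ᵥ x) + star x ⬝ᵥ ((B - A) *ᵥ x) = 0 := by
      rw [← dotProduct_add, ← add_mulVec]; simpa using hdot
    have hAx : star x ⬝ᵥ (A *ᵥ x) = 0 := le_antisymm (by linarith [hA.dotProduct_mulVec_nonneg x, hBA.dotProduct_mulVec_nonneg x]) (hA.dotProduct_mulVec_nonneg x)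
    have : A *ᵥ x = 0 := (hA.dotProduct_mulVec_zero_iff x).mp hAx
    have : A.det = 0 := Matrix.exists_mulVec_eq_zero_iff.mp ⟨x, hx0, this⟩
    rw [this, hd]
  · -- B is PosDef
    have hBpd : B.PosDef := psd_posDef_of_det_ne_zero hB hd
    obtain ⟨S, hS, hSS⟩ : ∃ S : Matrix n n ℝ, S.PosSemidef ∧ S * S = B :=
      by open scoped MatrixOrder in exact ⟨CFC.sqrt B, (CFC.sqrt_nonneg B).posSemidef, CFC.sqrt_mul_sqrt_self B hB.nonneg⟩
    have hSdet : S.det ≠ 0 := by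
      intro h; apply hd; rw [← hSS, det_mul, h, mul_zero]
    haveI : Invertible S := S.invertibleOfIsUnitDet (isUnit_iff_ne_zero.mpr hSdet)
    have hSinv : S⁻¹.IsHermitian := hS.isHermitian.inv
    have hMpsd : (S⁻¹ * A * S⁻¹).PosSemidef := by
      have h0 := hA.conjTranspose_mul_mul_same (B := S⁻¹)
      rwa [hSinv.eq] at h0
    have hSinvS : S⁻¹ * S = 1 := nonsing_inv_mul S (isUnit_iff_ne_zero.mpr hSdet)
    have hSSinv : S * S⁻¹ = 1 := mul_nonsing_inv S (isUnit_iff_ne_zero.mpr hSdet)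
    have h1M : (1 : Matrix n n ℝ) - S⁻¹ * A * S⁻¹ = S⁻¹ * (B - A) * S⁻¹ := by
      rw [Matrix.mul_sub, Matrix.sub_mul]
      congr 1
      rw [← hSS]
      calc (1 : Matrix n n ℝ) = S⁻¹ * S := hSinvS.symm
        _ = S⁻¹ * (S * (S * S⁻¹)) := by rw [hSSinv, Matrix.mul_one]
        _ = S⁻¹ * (S * S) * S⁻¹ := by simp only [Matrix.mul_assoc]
    have h1Mpsd : ((1 : Matrix n n ℝ) - S⁻¹ * A * S⁻¹).PosSemidef := by
      rw [h1M]
      have h0 := hBA.conjTranspose_mul_mul_same (B := S⁻¹)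
      rwa [hSinv.eq] at h0
    have hMdet : (S⁻¹ * A * S⁻¹).det ≤ 1 := psd_det_le_one hMpsd h1Mpsd
    have hAeq : A = S * (S⁻¹ * A * S⁻¹) * S := by
      calc A = (S * S⁻¹) * A * (S⁻¹ * S) := by rw [hSSinv, hSinvS, Matrix.one_mul, Matrix.mul_one]
        _ = S * (S⁻¹ * A * S⁻¹) * S := by simp only [Matrix.mul_assoc]
    have hBdetpos : 0 < B.det := hBpd.det_pos
    have hMdet0 : 0 ≤ (S⁻¹ * A * S⁻¹).det := psd_det_nonneg hMpsd
    calc A.det = S.det * (S⁻¹ * A * S⁻¹).det * S.det := by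
          conv_lhs => rw [hAeq]
          rw [det_mul, det_mul]
      _ = (S.det * S.det) * (S⁻¹ * A * S⁻¹).det := by ring
      _ = B.det * (S⁻¹ * A * S⁻¹).det := by rw [← det_mul, hSS]
      _ ≤ B.det * 1 := by nlinarith
      _ = B.det := mul_one _
/-- Fischer's inequality for a 2×2 block decomposition of a PSD matrix. -/
lemma fischer {α β : Type*} [Fintype α] [DecidableEq α] [Fintype β] [DecidableEq β]
    {N : Matrix (α ⊕ β) (α ⊕ β) ℝ} (hN : N.PosSemidef) :
    N.det ≤ N.toBlocks₁₁.det * N.toBlocks₂₂.det := by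
  have hA : N.toBlocks₁₁.PosSemidef := by
    have := hN.submatrix (Sum.inl : α → α ⊕ β)
    convert this using 2
    rfl
  have hD : N.toBlocks₂₂.PosSemidef := by
    have := hN.submatrix (Sum.inr : β → α ⊕ β)
    convert this using 2
    rfl
  by_cases hdA : N.toBlocks₁₁.det = 0
  · -- kernel vector of the A block gives kernel vector of N
    obtain ⟨x, hx0, hxA⟩ := Matrix.exists_mulVec_eq_zero_iff.mpr hdA
    set x' : α ⊕ β → ℝ := Sum.elim x 0 with hx'def
    have hx'0 : x' ≠ 0 := by
      intro h
      apply hx0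
      funext a
      have := congrFun h (Sum.inl a)
      simpa [hx'def] using this
    have hdot : star x' ⬝ᵥ (N *ᵥ x') = 0 := by
      have : star x' ⬝ᵥ (N *ᵥ x') = star x ⬝ᵥ (N.toBlocks₁₁ *ᵥ x) := by
        simp [hx'def, dotProduct, mulVec, Fintype.sum_sum_type, toBlocks₁₁, dotProduct]
      rw [this, hxA, dotProduct_zero]
    have hker : N *ᵥ x' = 0 := (hN.dotProduct_mulVec_zero_iff x').mp hdot
    have : N.det = 0 := Matrix.exists_mulVec_eq_zero_iff.mp ⟨x', hx'0, hker⟩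
    rw [this, hdA, zero_mul]
  · have hApd : N.toBlocks₁₁.PosDef := psd_posDef_of_det_ne_zero hA hdA
    haveI : Invertible N.toBlocks₁₁ :=
      N.toBlocks₁₁.invertibleOfIsUnitDet (isUnit_iff_ne_zero.mpr hdA)
    have h21 : N.toBlocks₂₁ = N.toBlocks₁₂ᴴ := by
      ext i j
      have := congrFun (congrFun hN.isHermitian.eq (Sum.inl j)) (Sum.inr i)
      simpa [toBlocks₂₁, toBlocks₁₂, conjTranspose_apply] using this
    have hfb : N = fromBlocks N.toBlocks₁₁ N.toBlocks₁₂ N.toBlocks₁₂ᴴ N.toBlocks₂₂ := by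
      rw [← h21, fromBlocks_toBlocks]
    have hdet : N.det = N.toBlocks₁₁.det *
        (N.toBlocks₂₂ - N.toBlocks₁₂ᴴ * ⅟N.toBlocks₁₁ * N.toBlocks₁₂).det := by
      conv_lhs => rw [hfb]
      exact det_fromBlocks₁₁ _ _ _ _
    have hNpsd' : (fromBlocks N.toBlocks₁₁ N.toBlocks₁₂ N.toBlocks₁₂ᴴ N.toBlocks₂₂).PosSemidef := by
      rw [← hfb]; exact hN
    have hSchur : (N.toBlocks₂₂ - N.toBlocks₁₂ᴴ * N.toBlocks₁₁⁻¹ * N.toBlocks₁₂).PosSemidef :=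
      (PosDef.fromBlocks₁₁ _ _ hApd).mp hNpsd'
    have hdiff : (N.toBlocks₂₂ - (N.toBlocks₂₂ - N.toBlocks₁₂ᴴ * N.toBlocks₁₁⁻¹ * N.toBlocks₁₂)).PosSemidef := by
      rw [sub_sub_cancel]
      exact hApd.inv.posSemidef.conjTranspose_mul_mul_same (B := N.toBlocks₁₂)
    have hSchurle : (N.toBlocks₂₂ - N.toBlocks₁₂ᴴ * N.toBlocks₁₁⁻¹ * N.toBlocks₁₂).det ≤ N.toBlocks₂₂.det :=
      det_mono_psd hSchur hdiff
    rw [hdet, invOf_eq_nonsing_inv]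
    have h0 : 0 ≤ N.toBlocks₁₁.det := psd_det_nonneg hA
    nlinarith [psd_det_nonneg hSchur]

variable {k l : ℕ}

/-- The matrix appearing in `wedgeDet`, abstractly: top rows from `P`, bottom rows from `R`. -/
def stack (P : Matrix (Fin k) (Fin (k + l)) ℝ) (R : Matrix (Fin l) (Fin (k + l)) ℝ) :
    Matrix (Fin (k + l)) (Fin (k + l)) ℝ :=
  Matrix.of fun i a => Fin.addCases (fun i' => P i' a) (fun b => R b a) i

lemma stack_conjTranspose_mul (P : Matrix (Fin k) (Fin (k + l)) ℝ)
    (R : Matrix (Fin l) (Fin (k + l)) ℝ) :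
    (stack P R)ᴴ * stack P R = Pᴴ * P + Rᴴ * R := by
  ext a a'
  simp only [mul_apply, conjTranspose_apply, star_trivial, Matrix.add_apply]
  rw [Fin.sum_univ_add]
  congr 1 <;> simp [stack]

lemma stack_mul_conjTranspose_submatrix (P : Matrix (Fin k) (Fin (k + l)) ℝ)
    (R : Matrix (Fin l) (Fin (k + l)) ℝ) :
    (stack P R * (stack P R)ᴴ).submatrix finSumFinEquiv finSumFinEquiv
      = fromBlocks (P * Pᴴ) (P * Rᴴ) (R * Pᴴ) (R * Rᴴ) := by
  ext i j
  cases i <;> cases j <;>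
    simp [stack, mul_apply, conjTranspose_apply, fromBlocks, submatrix_apply]

lemma det_stack_sq_le (P : Matrix (Fin k) (Fin (k + l)) ℝ)
    (R : Matrix (Fin l) (Fin (k + l)) ℝ) (hR : ((1 : Matrix (Fin l) (Fin l) ℝ) - R * Rᴴ).PosSemidef) :
    (stack P R).det ^ 2 ≤ (P * Pᴴ).det := by
  have h1 : (stack P R).det ^ 2 = (stack P R * (stack P R)ᴴ).det := by
    rw [det_mul, det_conjTranspose, star_trivial, pow_two]
  have h2 : (stack P R * (stack P R)ᴴ).det
      = ((stack P R * (stack P R)ᴴ).submatrix finSumFinEquiv finSumFinEquiv).det :=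
    (det_submatrix_equiv_self _ _).symm
  have hpsd : ((stack P R * (stack P R)ᴴ).submatrix finSumFinEquiv finSumFinEquiv).PosSemidef :=
    (posSemidef_self_mul_conjTranspose _).submatrix _
  have h3 := fischer hpsd
  rw [stack_mul_conjTranspose_submatrix] at h3
  simp only [fromBlocks_toBlocks, Matrix.toBlocks_fromBlocks₁₁, Matrix.toBlocks_fromBlocks₂₂] at h3
  have h4 : (R * Rᴴ).det ≤ 1 := by
    have := det_mono_psd (posSemidef_self_mul_conjTranspose R) (by simpa using hR)
    simpa using this
  have h5 : 0 ≤ (P * Pᴴ).det := by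
    have : (P * Pᴴ).PosSemidef := posSemidef_self_mul_conjTranspose P
    rw [this.isHermitian.det_eq_prod_eigenvalues]
    exact Finset.prod_nonneg fun i _ => by simpa using this.eigenvalues_nonneg i
  have h6 : 0 ≤ (R * Rᴴ).det := by
    have : (R * Rᴴ).PosSemidef := posSemidef_self_mul_conjTranspose R
    rw [this.isHermitian.det_eq_prod_eigenvalues]
    exact Finset.prod_nonneg fun i _ => by simpa using this.eigenvalues_nonneg i
  rw [h1, h2, stack_mul_conjTranspose_submatrix]
  nlinarith

lemma prod_le_two {k : ℕ} (hk : 2 ≤ k) (f : Fin k → ℝ) (h0 : ∀ i, 0 ≤ f i) (h1 : ∀ i, f i ≤ 1) :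
    ∏ i, f i ≤ f ⟨0, by omega⟩ * f ⟨1, by omega⟩ := by
  set i0 : Fin k := ⟨0, by omega⟩
  set i1 : Fin k := ⟨1, by omega⟩
  have hne : i1 ≠ i0 := by simp [i0, i1, Fin.ext_iff]
  have e1 : ∏ i, f i = f i0 * ∏ i ∈ Finset.univ.erase i0, f i :=
    (Finset.mul_prod_erase _ _ (Finset.mem_univ i0)).symm
  have e2 : ∏ i ∈ Finset.univ.erase i0, f i
      = f i1 * ∏ i ∈ (Finset.univ.erase i0).erase i1, f i :=
    (Finset.mul_prod_erase _ _ (Finset.mem_erase.mpr ⟨hne, Finset.mem_univ i1⟩)).symm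
  have e3 : ∏ i ∈ (Finset.univ.erase i0).erase i1, f i ≤ 1 :=
    Finset.prod_le_one (fun i _ => h0 i) (fun i _ => h1 i)
  have e4 : 0 ≤ ∏ i ∈ (Finset.univ.erase i0).erase i1, f i :=
    Finset.prod_nonneg fun i _ => h0 i
  rw [e1, e2]
  nlinarith [h0 i0, h0 i1, h1 i0, h1 i1, mul_nonneg (h0 i0) (h0 i1), e3, e4]

lemma sqrt_key {k : ℕ} (hk : 2 ≤ k) {S : Matrix (Fin k) (Fin k) ℝ} (hS : S.PosSemidef)
    (h1 : ((1 : Matrix (Fin k) (Fin k) ℝ) - S).PosSemidef) :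
    Real.sqrt S.det + Real.sqrt (1 - S).det ≤ 1 := by
  set lam := hS.isHermitian.eigenvalues with hlam
  have hnn : ∀ i, 0 ≤ lam i := fun i => hS.eigenvalues_nonneg i
  have hle : ∀ i, lam i ≤ 1 := fun i => eig_le_one hS.isHermitian h1 i
  have hdS : S.det = ∏ i, lam i := by
    simpa using hS.isHermitian.det_eq_prod_eigenvalues
  have hd1 : (1 - S).det = ∏ i, (1 - lam i) := det_one_sub_eq hS.isHermitian
  set i0 : Fin k := ⟨0, by omega⟩
  set i1 : Fin k := ⟨1, by omega⟩
  have hb1 : S.det ≤ lam i0 * lam i1 := by rw [hdS]; exact prod_le_two hk lam hnn hle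
  have hb2 : (1 - S).det ≤ (1 - lam i0) * (1 - lam i1) := by
    rw [hd1]
    exact prod_le_two hk _ (fun i => by linarith [hle i]) (fun i => by linarith [hnn i])
  have s1 : Real.sqrt S.det ≤ Real.sqrt (lam i0) * Real.sqrt (lam i1) := by
    rw [← Real.sqrt_mul (hnn i0)]
    exact Real.sqrt_le_sqrt hb1
  have s2 : Real.sqrt (1 - S).det ≤ Real.sqrt (1 - lam i0) * Real.sqrt (1 - lam i1) := by
    rw [← Real.sqrt_mul (by linarith [hle i0])]
    exact Real.sqrt_le_sqrt hb2
  set a := Real.sqrt (lam i0); set b := Real.sqrt (lam i1)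
  set c := Real.sqrt (1 - lam i0); set d := Real.sqrt (1 - lam i1)
  have ha : a ^ 2 = lam i0 := Real.sq_sqrt (hnn i0)
  have hb : b ^ 2 = lam i1 := Real.sq_sqrt (hnn i1)
  have hc : c ^ 2 = 1 - lam i0 := Real.sq_sqrt (by linarith [hle i0])
  have hd : d ^ 2 = 1 - lam i1 := Real.sq_sqrt (by linarith [hle i1])
  have h : a * b + c * d ≤ 1 := by
    nlinarith [sq_nonneg (a * d - c * b), Real.sqrt_nonneg (lam i0), Real.sqrt_nonneg (lam i1),
      Real.sqrt_nonneg (1 - lam i0), Real.sqrt_nonneg (1 - lam i1), sq_nonneg (a*b - c*d), sq_nonneg (a*b + c*d)]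
  linarith

lemma final_scalar {lam mu dA dB cA cB : ℝ} (hlam : -1 < lam) (hlam' : lam < 1)
    (hmu : -1 < mu) (hmu' : mu < 1) (hA : |dA| ≤ cA) (hB : |dB| ≤ cB) (hsum : cA + cB ≤ 1) :
    lam * dA + mu * dB < 1 := by
  have habsA : |lam| < 1 := abs_lt.mpr ⟨hlam, hlam'⟩
  have habsB : |mu| < 1 := abs_lt.mpr ⟨hmu, hmu'⟩
  have h1 : lam * dA ≤ |lam| * |dA| := (le_abs_self _).trans (abs_mul _ _).le
  have h2 : mu * dB ≤ |mu| * |dB| := (le_abs_self _).trans (abs_mul _ _).le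
  rcases eq_or_ne dA 0 with h | h
  · rcases eq_or_ne dB 0 with h' | h'
    · simp [h, h']
    · have : |mu| * |dB| < |dB| := by
        have := abs_pos.mpr h'
        nlinarith
      have h3 : |dB| ≤ 1 := by
        have := abs_nonneg dA
        linarith [hA, hB]
      simp only [h, mul_zero, zero_add]
      calc mu * dB ≤ |mu| * |dB| := h2
        _ < |dB| := this
        _ ≤ 1 := h3
  · have hApos := abs_pos.mpr h
    have l1 : |lam| * |dA| < |dA| := by nlinarith
    have l2 : |mu| * |dB| ≤ |dB| := by nlinarith [abs_nonneg dB, abs_nonneg mu]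
    calc lam * dA + mu * dB ≤ |lam| * |dA| + |mu| * |dB| := by linarith
      _ < |dA| + |dB| := by linarith
      _ ≤ cA + cB := by linarith
      _ ≤ 1 := hsum
lemma euclid_sum_apply {q : ℕ} {ι : Type*} [DecidableEq ι] (s : Finset ι)
    (f : ι → EuclideanSpace ℝ (Fin q)) (j : Fin q) :
    (∑ i ∈ s, f i) j = ∑ i ∈ s, f i j := by
  induction s using Finset.induction_on with
  | empty => rfl
  | @insert a s h ih => rw [Finset.sum_insert h, Finset.sum_insert h, ← ih]; rfl

lemma onb_sum_mul {p q : ℕ} {f : Fin p → EuclideanSpace ℝ (Fin q)} (hf : Orthonormal ℝ f)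
    (b b' : Fin p) : ∑ r, f b r * f b' r = if b = b' then 1 else 0 := by
  have := orthonormal_iff_ite.mp hf b b'
  simpa [PiLp.inner_apply, RCLike.inner_apply, conj_trivial, mul_comm] using this

theorem main1 {k l m : ℕ} (hk : 1 ≤ k)
    (u w : Fin l → EuclideanSpace ℝ (Fin m)) (hu : Orthonormal ℝ u) (lam mu : ℝ) :
    torusForm k l m u w lam mu (xPlane k l m u) = lam := by
  have hM1 : (Matrix.of fun i a => Fin.addCases
      (fun i' => (xPlane k l m u a) (Fin.castAdd m (Fin.castAdd k i')))
      (fun b => ∑ r, (xPlane k l m u a) (Fin.natAdd (k + k) r) * u b r) i)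
      = (1 : Matrix (Fin (k + l)) (Fin (k + l)) ℝ) := by
    ext i a
    induction i using Fin.addCases with
    | left i' =>
      induction a using Fin.addCases with
      | left a' =>
        simp [xPlane, EuclideanSpace.single_apply, one_apply, Fin.ext_iff]
      | right b =>
        have h1 : ∀ r : Fin m, (Fin.castAdd m (Fin.castAdd k i') : Fin (k+k+m))
            ≠ Fin.natAdd (k + k) r := by
          intro r h
          have := congrArg Fin.val h
          simp at this
          omega
        have h2 : (Fin.castAdd l i' : Fin (k + l)) ≠ Fin.natAdd k b := by
          intro h
          have := congrArg Fin.val h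
          have hlt := i'.isLt
          simp at this
          omega
        simp [xPlane, euclid_sum_apply, EuclideanSpace.single_apply, one_apply, h1, h2]
    | right b =>
      induction a using Fin.addCases with
      | left a' =>
        have h1 : ∀ r : Fin m, (Fin.natAdd (k + k) r : Fin (k+k+m))
            ≠ Fin.castAdd m (Fin.castAdd k a') := by
          intro r h
          have := congrArg Fin.val h
          have hlt := a'.isLt
          simp at this
          omega
        have h2 : (Fin.natAdd k b : Fin (k + l)) ≠ Fin.castAdd l a' := by
          intro h
          have := congrArg Fin.val h
          have hlt := a'.isLt
          simp at this
          omega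
        simp [xPlane, EuclideanSpace.single_apply, one_apply, h1, h2]
      | right b' =>
        have key : ∀ r : Fin m, (∑ r', u b' r' • EuclideanSpace.single
            (Fin.natAdd (k+k) r') (1:ℝ)) (Fin.natAdd (k+k) r) = u b' r := by
          intro r
          rw [euclid_sum_apply, Finset.sum_eq_single r]
          · simp [EuclideanSpace.single_apply]
          · intro x _ hx
            have hne : (Fin.natAdd (k+k) r : Fin (k+k+m)) ≠ Fin.natAdd (k+k) x := by
              intro h
              exact hx (Fin.ext (by simpa using congrArg Fin.val h)).symm
            simp [EuclideanSpace.single_apply, hne]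
          · simp
        simp only [Matrix.of_apply, xPlane, Fin.addCases_right, key, one_apply]
        rw [onb_sum_mul hu b' b]
        by_cases hbb : b = b'
        · simp [hbb]
        · rw [if_neg (fun h => hbb h.symm), if_neg (fun h => hbb (by
            have := congrArg Fin.val h
            simp at this
            exact Fin.ext this))]
  have hM2 : ((Matrix.of fun i a => Fin.addCases
      (fun i' => (xPlane k l m u a) (Fin.castAdd m (Fin.natAdd k i')))
      (fun b => ∑ r, (xPlane k l m u a) (Fin.natAdd (k + k) r) * w b r) i)
      : Matrix (Fin (k + l)) (Fin (k + l)) ℝ).det = 0 := by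
    apply Matrix.det_eq_zero_of_column_eq_zero (Fin.castAdd l ⟨0, hk⟩)
    have hx0 : xPlane k l m u (Fin.castAdd l ⟨0, hk⟩)
        = EuclideanSpace.single (Fin.castAdd m (Fin.castAdd k ⟨0, hk⟩)) (1:ℝ) := by
      simp only [xPlane]
      exact Fin.addCases_left _
    intro i
    induction i using Fin.addCases with
    | left i' =>
      have h1 : (Fin.castAdd m (Fin.castAdd k (⟨0, hk⟩ : Fin k)) : Fin (k+k+m))
          ≠ Fin.castAdd m (Fin.natAdd k i') := by
        intro h
        have := congrArg Fin.val h
        simp at this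
        omega
      simp only [Matrix.of_apply, Fin.addCases_left, hx0]
      rw [EuclideanSpace.single_apply, if_neg (by simp [Fin.ext_iff]; omega)]
    | right b =>
      have h1 : ∀ r : Fin m, (Fin.castAdd m (Fin.castAdd k (⟨0, hk⟩ : Fin k)) : Fin (k+k+m))
          ≠ Fin.natAdd (k + k) r := by
        intro r h
        have := congrArg Fin.val h
        simp at this
        omega
      simp only [Matrix.of_apply, Fin.addCases_right, hx0]
      refine Finset.sum_eq_zero fun x _ => ?_
      rw [EuclideanSpace.single_apply, if_neg (by simp [Fin.ext_iff]; omega), zero_mul]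
  simp only [torusForm, wedgeDet]
  rw [hM1, hM2, det_one, mul_one, mul_zero, add_zero]

theorem main2 {k l m : ℕ} (hk : 1 ≤ k)
    (u w : Fin l → EuclideanSpace ℝ (Fin m)) (hw : Orthonormal ℝ w) (lam mu : ℝ) :
    torusForm k l m u w lam mu (yPlane k l m w) = mu := by
  have hM1 : (Matrix.of fun i a => Fin.addCases
      (fun i' => (yPlane k l m w a) (Fin.castAdd m (Fin.natAdd k i')))
      (fun b => ∑ r, (yPlane k l m w a) (Fin.natAdd (k + k) r) * w b r) i)
      = (1 : Matrix (Fin (k + l)) (Fin (k + l)) ℝ) := by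
    ext i a
    induction i using Fin.addCases with
    | left i' =>
      induction a using Fin.addCases with
      | left a' =>
        simp [yPlane, EuclideanSpace.single_apply, one_apply, Fin.ext_iff]
      | right b =>
        have h1 : ∀ r : Fin m, (Fin.castAdd m (Fin.natAdd k i') : Fin (k+k+m))
            ≠ Fin.natAdd (k + k) r := by
          intro r h
          have := congrArg Fin.val h
          have hlt := i'.isLt
          simp at this
          omega
        have h2 : (Fin.castAdd l i' : Fin (k + l)) ≠ Fin.natAdd k b := by
          intro h
          have := congrArg Fin.val h
          have hlt := i'.isLt
          simp at this
          omega
        simp [yPlane, euclid_sum_apply, EuclideanSpace.single_apply, one_apply, h2]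
        refine Finset.sum_eq_zero fun x _ => ?_
        rw [if_neg (by have := i'.isLt; simp [Fin.ext_iff]; omega)]
    | right b =>
      induction a using Fin.addCases with
      | left a' =>
        have h1 : ∀ r : Fin m, (Fin.natAdd (k + k) r : Fin (k+k+m))
            ≠ Fin.castAdd m (Fin.natAdd k a') := by
          intro r h
          have := congrArg Fin.val h
          have hlt := a'.isLt
          simp at this
          omega
        have h2 : (Fin.natAdd k b : Fin (k + l)) ≠ Fin.castAdd l a' := by
          intro h
          have := congrArg Fin.val h
          have hlt := a'.isLt
          simp at this
          omega
        simp [yPlane, EuclideanSpace.single_apply, one_apply, h2]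
        refine Finset.sum_eq_zero fun x _ => ?_
        rw [if_neg (by have := a'.isLt; simp [Fin.ext_iff]; omega)]
      | right b' =>
        have key : ∀ r : Fin m, (∑ r', w b' r' • EuclideanSpace.single
            (Fin.natAdd (k+k) r') (1:ℝ)) (Fin.natAdd (k+k) r) = w b' r := by
          intro r
          rw [euclid_sum_apply, Finset.sum_eq_single r]
          · simp [EuclideanSpace.single_apply]
          · intro x _ hx
            have hne : (Fin.natAdd (k+k) r : Fin (k+k+m)) ≠ Fin.natAdd (k+k) x := by
              intro h
              exact hx (Fin.ext (by simpa using congrArg Fin.val h)).symm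
            simp [EuclideanSpace.single_apply, hne]
          · simp
        simp only [Matrix.of_apply, yPlane, Fin.addCases_right, key, one_apply]
        rw [onb_sum_mul hw b' b]
        by_cases hbb : b = b'
        · simp [hbb]
        · rw [if_neg (fun h => hbb h.symm), if_neg (fun h => hbb (by
            have := congrArg Fin.val h
            simp at this
            exact Fin.ext this))]
  have hM2 : ((Matrix.of fun i a => Fin.addCases
      (fun i' => (yPlane k l m w a) (Fin.castAdd m (Fin.castAdd k i')))
      (fun b => ∑ r, (yPlane k l m w a) (Fin.natAdd (k + k) r) * u b r) i)
      : Matrix (Fin (k + l)) (Fin (k + l)) ℝ).det = 0 := by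
    apply Matrix.det_eq_zero_of_column_eq_zero (Fin.castAdd l ⟨0, hk⟩)
    have hx0 : yPlane k l m w (Fin.castAdd l ⟨0, hk⟩)
        = EuclideanSpace.single (Fin.castAdd m (Fin.natAdd k ⟨0, hk⟩)) (1:ℝ) := by
      simp only [yPlane]
      exact Fin.addCases_left _
    intro i
    induction i using Fin.addCases with
    | left i' =>
      simp only [Matrix.of_apply, Fin.addCases_left, hx0]
      rw [EuclideanSpace.single_apply, if_neg (by
        have := i'.isLt
        simp [Fin.ext_iff]
        omega)]
    | right b =>
      simp only [Matrix.of_apply, Fin.addCases_right, hx0]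
      refine Finset.sum_eq_zero fun x _ => ?_
      rw [EuclideanSpace.single_apply, if_neg (by simp [Fin.ext_iff]; omega), zero_mul]
  simp only [torusForm, wedgeDet]
  rw [hM1, hM2, det_one, mul_one, mul_zero, zero_add]

/-- Orthonormal families as matrices with orthonormal columns. -/
lemma onb_matrix_mul {p q : ℕ} {f : Fin p → EuclideanSpace ℝ (Fin q)} (hf : Orthonormal ℝ f) :
    (Matrix.of fun (r : Fin q) (b : Fin p) => f b r)ᴴ * (Matrix.of fun r b => f b r) = 1 := by
  ext b b'
  have := orthonormal_iff_ite.mp hf b b'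
  simp only [PiLp.inner_apply, RCLike.inner_apply, conj_trivial] at this
  simp only [mul_apply, conjTranspose_apply, star_trivial, Matrix.of_apply, one_apply]
  simpa [mul_comm] using this

/-- `1 - V * Vᴴ` is PSD when `V` has orthonormal columns. -/
lemma psd_one_sub_self_mul {p q : Type*} [Fintype p] [Fintype q] [DecidableEq p] [DecidableEq q]
    (V : Matrix p q ℝ) (h : Vᴴ * V = 1) :
    ((1 : Matrix p p ℝ) - V * Vᴴ).PosSemidef := by
  have hherm : ((1 : Matrix p p ℝ) - V * Vᴴ)ᴴ = 1 - V * Vᴴ := by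
    rw [conjTranspose_sub, conjTranspose_one, conjTranspose_mul, conjTranspose_conjTranspose]
  have hPP : V * Vᴴ * (V * Vᴴ) = V * Vᴴ := by
    rw [Matrix.mul_assoc, ← Matrix.mul_assoc Vᴴ, h, Matrix.one_mul]
  have hidem : ((1 : Matrix p p ℝ) - V * Vᴴ) * ((1 : Matrix p p ℝ) - V * Vᴴ) = 1 - V * Vᴴ := by
    calc ((1 : Matrix p p ℝ) - V * Vᴴ) * ((1 : Matrix p p ℝ) - V * Vᴴ)
        = (1 * 1 - 1 * (V * Vᴴ)) - ((V * Vᴴ) * 1 - V * Vᴴ * (V * Vᴴ)) := by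
          rw [Matrix.sub_mul, Matrix.mul_sub, Matrix.mul_sub]
      _ = 1 - V * Vᴴ := by rw [hPP, Matrix.one_mul, Matrix.one_mul, Matrix.mul_one]; abel
  have : (1 : Matrix p p ℝ) - V * Vᴴ
      = ((1 : Matrix p p ℝ) - V * Vᴴ)ᴴ * ((1 : Matrix p p ℝ) - V * Vᴴ) := by
    rw [hherm, hidem]
  rw [this]
  exact posSemidef_conjTranspose_mul_self _

theorem main3 {k l m : ℕ} (hk : 2 ≤ k)
    (u w : Fin l → EuclideanSpace ℝ (Fin m)) (hu : Orthonormal ℝ u) (hw : Orthonormal ℝ w)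
    {lam mu : ℝ} (h1 : -1 < lam) (h2 : lam < 1) (h3 : -1 < mu) (h4 : mu < 1)
    (v : Fin (k + l) → EuclideanSpace ℝ (Fin (k + k + m))) (hv : Orthonormal ℝ v) :
    torusForm k l m u w lam mu v < 1 := by
  classical
  set X : Matrix (Fin k) (Fin (k + l)) ℝ :=
    Matrix.of fun i a => v a (Fin.castAdd m (Fin.castAdd k i)) with hX
  set Y : Matrix (Fin k) (Fin (k + l)) ℝ :=
    Matrix.of fun i a => v a (Fin.castAdd m (Fin.natAdd k i)) with hY
  set Z : Matrix (Fin m) (Fin (k + l)) ℝ :=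
    Matrix.of fun r a => v a (Fin.natAdd (k + k) r) with hZ
  set U : Matrix (Fin m) (Fin l) ℝ := Matrix.of fun r b => u b r with hU
  set W : Matrix (Fin m) (Fin l) ℝ := Matrix.of fun r b => w b r with hW
  set V : Matrix (Fin (k + k + m)) (Fin (k + l)) ℝ := Matrix.of fun i a => v a i with hV
  have hU1 : Uᴴ * U = 1 := onb_matrix_mul hu
  have hW1 : Wᴴ * W = 1 := onb_matrix_mul hw
  have hV1 : Vᴴ * V = 1 := onb_matrix_mul hv
  -- identify the two wedgeDet matrices
  have hAeq : (Matrix.of fun i a => Fin.addCases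
        (fun i' => (v a) (Fin.castAdd m (Fin.castAdd k i')))
        (fun b => ∑ r, (v a) (Fin.natAdd (k + k) r) * u b r) i) = stack X (Uᴴ * Z) := by
    ext i a
    induction i using Fin.addCases with
    | left i' => simp [stack, hX]
    | right b => simp [stack, mul_apply, mul_comm, hU, hZ]
  have hBeq : (Matrix.of fun i a => Fin.addCases
        (fun i' => (v a) (Fin.castAdd m (Fin.natAdd k i')))
        (fun b => ∑ r, (v a) (Fin.natAdd (k + k) r) * w b r) i) = stack Y (Wᴴ * Z) := by
    ext i a
    induction i using Fin.addCases with
    | left i' => simp [stack, hY]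
    | right b => simp [stack, mul_apply, mul_comm, hW, hZ]
  -- the coordinate-block identity
  have hXYZ : Xᴴ * X + Yᴴ * Y + Zᴴ * Z = 1 := by
    rw [← hV1]
    ext a a'
    simp only [Matrix.add_apply, mul_apply, conjTranspose_apply, star_trivial, Matrix.of_apply,
      hX, hY, hZ, hV]
    rw [Fin.sum_univ_add (f := fun i : Fin (k + k + m) => v a i * v a' i),
      Fin.sum_univ_add (f := fun i : Fin (k + k) => v a (Fin.castAdd m i) * v a' (Fin.castAdd m i))]
  -- PSD facts
  have hVVpsd : ((1 : Matrix (Fin (k + k + m)) (Fin (k + k + m)) ℝ) - V * Vᴴ).PosSemidef :=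
    psd_one_sub_self_mul V hV1
  have hXsub : X * Xᴴ = (V * Vᴴ).submatrix (fun i => Fin.castAdd m (Fin.castAdd k i))
      (fun i => Fin.castAdd m (Fin.castAdd k i)) := by
    ext i i'; simp [mul_apply, conjTranspose_apply, submatrix_apply, hX, hV]
  have hZsub : Z * Zᴴ = (V * Vᴴ).submatrix (fun r => Fin.natAdd (k + k) r)
      (fun r => Fin.natAdd (k + k) r) := by
    ext r r'; simp [mul_apply, conjTranspose_apply, submatrix_apply, hZ, hV]
  have hsub1 : ∀ (p : ℕ) (e : Fin p → Fin (k + k + m)), Function.Injective e →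
      (1 : Matrix (Fin p) (Fin p) ℝ) - (V * Vᴴ).submatrix e e
        = ((1 : Matrix (Fin (k + k + m)) (Fin (k + k + m)) ℝ) - V * Vᴴ).submatrix e e := by
    intro p e he
    ext i i'
    simp only [Matrix.sub_apply, submatrix_apply, one_apply]
    congr 1
    by_cases hii : i = i'
    · simp [hii]
    · rw [if_neg hii, if_neg (fun hee => hii (he hee))]
  have hinjx : Function.Injective (fun i : Fin k => Fin.castAdd m (Fin.castAdd k i)) := by
    intro i i' hii; ext
    simpa [Fin.ext_iff] using hii
  have hinjz : Function.Injective (fun r : Fin m => Fin.natAdd (k + k) r) := by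
    intro i i' hii; ext
    simpa [Fin.ext_iff] using hii
  have h1X : ((1 : Matrix (Fin k) (Fin k) ℝ) - X * Xᴴ).PosSemidef := by
    rw [hXsub, hsub1 _ _ hinjx]
    exact hVVpsd.submatrix _
  have h1Z : ((1 : Matrix (Fin m) (Fin m) ℝ) - Z * Zᴴ).PosSemidef := by
    rw [hZsub, hsub1 _ _ hinjz]
    exact hVVpsd.submatrix _
  -- bound for the first determinant
  have hRA : ((1 : Matrix (Fin l) (Fin l) ℝ) - (Uᴴ * Z) * (Uᴴ * Z)ᴴ).PosSemidef := by
    have he : (1 : Matrix (Fin l) (Fin l) ℝ) - (Uᴴ * Z) * (Uᴴ * Z)ᴴ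
        = Uᴴ * ((1 : Matrix (Fin m) (Fin m) ℝ) - Z * Zᴴ) * U := by
      rw [conjTranspose_mul, conjTranspose_conjTranspose, Matrix.mul_sub, Matrix.sub_mul,
        Matrix.mul_one, hU1]
      simp only [Matrix.mul_assoc]
    rw [he]
    exact h1Z.conjTranspose_mul_mul_same (B := U)
  have hdA2 : (stack X (Uᴴ * Z)).det ^ 2 ≤ (X * Xᴴ).det := det_stack_sq_le X (Uᴴ * Z) hRA
  -- bound for the second determinant
  have hdB2 : (stack Y (Wᴴ * Z)).det ^ 2 ≤ ((1 : Matrix (Fin k) (Fin k) ℝ) - X * Xᴴ).det := by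
    have e1 : (stack Y (Wᴴ * Z)).det ^ 2 = (Yᴴ * Y + (Wᴴ * Z)ᴴ * (Wᴴ * Z)).det := by
      rw [← stack_conjTranspose_mul, det_mul, det_conjTranspose, star_trivial, pow_two]
    have hTpsd : (Yᴴ * Y + (Wᴴ * Z)ᴴ * (Wᴴ * Z)).PosSemidef :=
      (posSemidef_conjTranspose_mul_self Y).add (posSemidef_conjTranspose_mul_self (Wᴴ * Z))
    have hdiff : ((1 - Xᴴ * X) - (Yᴴ * Y + (Wᴴ * Z)ᴴ * (Wᴴ * Z))).PosSemidef := by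
      have e2 : (1 - Xᴴ * X) - (Yᴴ * Y + (Wᴴ * Z)ᴴ * (Wᴴ * Z))
          = Zᴴ * ((1 : Matrix (Fin m) (Fin m) ℝ) - W * Wᴴ) * Z := by
        have e3 : (1 : Matrix (Fin (k+l)) (Fin (k+l)) ℝ) - Xᴴ * X = Yᴴ * Y + Zᴴ * Z := by
          rw [← hXYZ]; abel
        rw [e3, conjTranspose_mul, conjTranspose_conjTranspose, Matrix.mul_sub, Matrix.sub_mul,
          Matrix.mul_one]
        have e4 : Wᴴᴴ * Wᴴ * Z = W * (Wᴴ * Z) := by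
          rw [conjTranspose_conjTranspose, Matrix.mul_assoc]
        simp only [Matrix.mul_assoc]
        abel
      rw [e2]
      exact (psd_one_sub_self_mul W hW1).conjTranspose_mul_mul_same (B := Z)
    have e5 : (Yᴴ * Y + (Wᴴ * Z)ᴴ * (Wᴴ * Z)).det ≤ ((1 : Matrix (Fin (k+l)) (Fin (k+l)) ℝ) - Xᴴ * X).det :=
      det_mono_psd hTpsd hdiff
    have e6 : ((1 : Matrix (Fin (k+l)) (Fin (k+l)) ℝ) - Xᴴ * X).det
        = ((1 : Matrix (Fin k) (Fin k) ℝ) - X * Xᴴ).det := det_one_sub_mul_comm Xᴴ X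
    rw [e1]
    linarith
  -- assemble
  have hSpsd : (X * Xᴴ).PosSemidef := posSemidef_self_mul_conjTranspose X
  have hkey := sqrt_key hk hSpsd h1X
  have habs1 : |(stack X (Uᴴ * Z)).det| ≤ Real.sqrt (X * Xᴴ).det := by
    rw [← Real.sqrt_sq_eq_abs]
    exact Real.sqrt_le_sqrt hdA2
  have habs2 : |(stack Y (Wᴴ * Z)).det| ≤ Real.sqrt ((1 : Matrix (Fin k) (Fin k) ℝ) - X * Xᴴ).det := by
    rw [← Real.sqrt_sq_eq_abs]
    exact Real.sqrt_le_sqrt hdB2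
  have : torusForm k l m u w lam mu v
      = lam * (stack X (Uᴴ * Z)).det + mu * (stack Y (Wᴴ * Z)).det := by
    simp only [torusForm, wedgeDet]
    rw [hAeq, hBeq]
  rw [this]
  exact final_scalar h1 h2 h3 h4 habs1 habs2 hkey

end Stmt4Aux

/-- With `Ψ(α,β,λ,μ) = λ dx₁∧⋯∧dx_{n-j}∧α* + μ dy₁∧⋯∧dy_{n-j}∧β*`:
if `λ = 1` then `Ψ` evaluates to `1` on `∂_{x₁}∧⋯∧∂_{x_{n-j}}∧α`; if `μ = 1` then `Ψ`
evaluates to `1` on `∂_{y₁}∧⋯∧∂_{y_{n-j}}∧β`; and if `-1 < λ < 1` and `-1 < μ < 1`, then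
`Ψ(ξ) < 1` for every unit simple `(n-j+l)`-vector `ξ` (i.e. every orthonormal family). -/
theorem stmt_4 (n j l m : ℕ) (hj1 : 1 ≤ j) (hj2 : j ≤ n - 2) (hl : 1 ≤ l) (hlm : l ≤ m)
    (u w : Fin l → EuclideanSpace ℝ (Fin m))
    (hu : Orthonormal ℝ u) (hw : Orthonormal ℝ w)
    (lam mu : ℝ) (hlam : -1 ≤ lam ∧ lam ≤ 1) (hmu : -1 ≤ mu ∧ mu ≤ 1) :
    (lam = 1 → torusForm (n - j) l m u w lam mu (xPlane (n - j) l m u) = 1) ∧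
    (mu = 1 → torusForm (n - j) l m u w lam mu (yPlane (n - j) l m w) = 1) ∧
    ((-1 < lam ∧ lam < 1 ∧ -1 < mu ∧ mu < 1) →
      ∀ v : Fin ((n - j) + l) → EuclideanSpace ℝ (Fin ((n - j) + (n - j) + m)),
        Orthonormal ℝ v → torusForm (n - j) l m u w lam mu v < 1) := by
  have hk2 : 2 ≤ n - j := by omega
  have hk1 : 1 ≤ n - j := by omega
  refine ⟨?_, ?_, ?_⟩
  · intro h
    rw [Stmt4Aux.main1 hk1 u w hu lam mu, h]
  · intro h
    rw [Stmt4Aux.main2 hk1 u w hw lam mu, h]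
  · rintro ⟨ha, hb, hc, hd⟩ v hv
    exact Stmt4Aux.main3 hk2 u w hu hw ha hb hc hd v hv
end

section
/- If ψ is a simple k-covector on an inner product space (i.e., ψ = c·v₁*∧⋯∧v_k* for an orthonormal family v₁,…,v_k and scalar c ≥ 0), then the comass of ψ equals its norm: comass(ψ) = ‖ψ‖ = c. -/
open Finset in
lemma key_id {d k : ℕ} (x y : Fin k → EuclideanSpace ℝ (Fin d)) :
    ∑ f : Fin k → Fin d,
      (Matrix.det (Matrix.of fun i a => x i (f a))) *
      (Matrix.det (Matrix.of fun i a => y i (f a)))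
    = (Nat.factorial k : ℝ) * Matrix.det (Matrix.of fun i j => ∑ r, x i r * y j r) := by
  have hdet : ∀ (M : Matrix (Fin k) (Fin k) ℝ),
      M.det = ∑ σ : Equiv.Perm (Fin k), ((Equiv.Perm.sign σ : ℤ) : ℝ) * ∏ i, M (σ i) i :=
    fun M => Matrix.det_apply' M
  set G : Matrix (Fin k) (Fin k) ℝ := Matrix.of fun i j => ∑ r, x i r * y j r with hG
  calc ∑ f : Fin k → Fin d,
      (Matrix.det (Matrix.of fun i a => x i (f a))) *
      (Matrix.det (Matrix.of fun i a => y i (f a)))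
      = ∑ σ : Equiv.Perm (Fin k), ∑ τ : Equiv.Perm (Fin k),
          (((Equiv.Perm.sign σ : ℤ) : ℝ) * ((Equiv.Perm.sign τ : ℤ) : ℝ)) *
          ∏ a, G (σ a) (τ a) := by
        have h1 : ∀ f : Fin k → Fin d,
            (Matrix.det (Matrix.of fun i a => x i (f a))) *
            (Matrix.det (Matrix.of fun i a => y i (f a)))
            = ∑ σ : Equiv.Perm (Fin k), ∑ τ : Equiv.Perm (Fin k),
              (((Equiv.Perm.sign σ : ℤ) : ℝ) * ((Equiv.Perm.sign τ : ℤ) : ℝ)) *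
              ∏ a, (x (σ a) (f a) * y (τ a) (f a)) := by
          intro f
          rw [hdet, hdet, Finset.sum_mul_sum]
          refine Finset.sum_congr rfl fun σ _ => Finset.sum_congr rfl fun τ _ => ?_
          simp only [Matrix.of_apply]
          rw [Finset.prod_mul_distrib]
          ring
        simp only [h1]
        rw [Finset.sum_comm]
        refine Finset.sum_congr rfl fun σ _ => ?_
        rw [Finset.sum_comm]
        refine Finset.sum_congr rfl fun τ _ => ?_
        rw [← Finset.mul_sum]
        congr 1
        have := Finset.prod_univ_sum (fun _ : Fin k => (Finset.univ : Finset (Fin d)))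
          (fun a r => x (σ a) r * y (τ a) r)
        rw [Fintype.piFinset_univ] at this
        simp only [hG, Matrix.of_apply]
        rw [← this]
    _ = ∑ σ : Equiv.Perm (Fin k), G.det := by
        refine Finset.sum_congr rfl fun σ _ => ?_
        have hσ2 : ((Equiv.Perm.sign σ : ℤ) : ℝ) * ((Equiv.Perm.sign σ : ℤ) : ℝ) = 1 := by
          rw [← Int.cast_mul, ← Units.val_mul, Int.units_mul_self]; norm_num
        rw [← Fintype.sum_equiv (Equiv.mulRight σ)
          (fun ρ => ((Equiv.Perm.sign ρ : ℤ) : ℝ) * ∏ b, G b (ρ b))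
          (fun τ => (((Equiv.Perm.sign σ : ℤ) : ℝ) * ((Equiv.Perm.sign τ : ℤ) : ℝ)) *
            ∏ a, G (σ a) (τ a)) ?_]
        · rw [← Matrix.det_transpose G, hdet]
          simp only [Matrix.transpose_apply]
        · intro ρ
          simp only [Equiv.coe_mulRight, Equiv.Perm.mul_apply, Equiv.Perm.sign_mul,
            Units.val_mul, Int.cast_mul, Equiv.Perm.coe_mul, Function.comp_apply]
          rw [Equiv.prod_comp σ (fun b => G b (ρ b))] at *
          linear_combination (-(((Equiv.Perm.sign ρ : ℤ) : ℝ) * ∏ b : Fin k, G b (ρ b))) * hσ2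
    _ = (Nat.factorial k : ℝ) * G.det := by
        rw [Finset.sum_const, Finset.card_univ, Fintype.card_perm, Fintype.card_fin,
          nsmul_eq_mul]


/-- If `ψ` is a simple `k`-covector on Euclidean space, i.e. `ψ = c·v₁*∧⋯∧v_k*` for an
orthonormal family `v` and a scalar `c ≥ 0`, then its comass (the sup of its values on
orthonormal families, i.e. on unit simple `k`-vectors) equals its inner-product norm
(computed by the formula `‖ψ‖² = (1/k!)·Σ_f ψ(e_{f 1},…,e_{f k})²`), and both equal `c`. -/
theorem stmt_6 {d k : ℕ} (ψ : AlternatingMap ℝ (EuclideanSpace ℝ (Fin d)) ℝ (Fin k))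
    (c : ℝ) (hc : 0 ≤ c) (v : Fin k → EuclideanSpace ℝ (Fin d)) (hv : Orthonormal ℝ v)
    (hψ : ∀ w : Fin k → EuclideanSpace ℝ (Fin d),
      ψ w = c * Matrix.det (Matrix.of fun i a => ∑ r, v i r * w a r)) :
    sSup {r : ℝ | ∃ w : Fin k → EuclideanSpace ℝ (Fin d), Orthonormal ℝ w ∧ r = ψ w} = c ∧
    Real.sqrt ((1 / (Nat.factorial k : ℝ)) *
      ∑ f : Fin k → Fin d, (ψ (fun i => EuclideanSpace.single (f i) 1)) ^ 2) = c := by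
  have hfac : (0 : ℝ) < (Nat.factorial k : ℝ) := by positivity
  have hgram : ∀ (u : Fin k → EuclideanSpace ℝ (Fin d)), Orthonormal ℝ u →
      (Matrix.of fun i j => ∑ r, u i r * u j r) = (1 : Matrix (Fin k) (Fin k) ℝ) := by
    intro u hu
    rw [orthonormal_iff_ite] at hu
    ext i j
    have := hu i j
    simp only [PiLp.inner_apply, RCLike.inner_apply, conj_trivial] at this
    simp only [Matrix.of_apply, Matrix.one_apply]
    rw [← this]
    exact Finset.sum_congr rfl fun x _ => mul_comm _ _
  -- sum of squared subdeterminants of an orthonormal family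
  have hsum : ∀ (u : Fin k → EuclideanSpace ℝ (Fin d)), Orthonormal ℝ u →
      ∑ f : Fin k → Fin d, (Matrix.det (Matrix.of fun i a => u i (f a))) ^ 2
        = (Nat.factorial k : ℝ) := by
    intro u hu
    have := key_id u u
    rw [hgram u hu, Matrix.det_one, mul_one] at this
    simpa [sq] using this
  -- ψ evaluated on standard basis vectors
  have hψe : ∀ f : Fin k → Fin d, ψ (fun i => EuclideanSpace.single (f i) 1)
      = c * Matrix.det (Matrix.of fun i a => v i (f a)) := by
    intro f
    rw [hψ]
    congr 2
    ext i a
    simp [EuclideanSpace.single_apply]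
  -- value on v
  have hψv : ψ v = c := by rw [hψ v, hgram v hv, Matrix.det_one, mul_one]
  -- upper bound
  have hub : ∀ w : Fin k → EuclideanSpace ℝ (Fin d), Orthonormal ℝ w → ψ w ≤ c := by
    intro w hw
    have hk := key_id v w
    have hcs := Finset.sum_mul_sq_le_sq_mul_sq Finset.univ
      (fun f : Fin k → Fin d => Matrix.det (Matrix.of fun i a => v i (f a)))
      (fun f : Fin k → Fin d => Matrix.det (Matrix.of fun i a => w i (f a)))
    rw [hsum v hv, hsum w hw, hk] at hcs
    have hdet1 : Matrix.det (Matrix.of fun i a => ∑ r, v i r * w a r) ≤ 1 := by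
      nlinarith [hcs, mul_pos hfac hfac,
        sq_nonneg ((Nat.factorial k : ℝ) *
          (Matrix.det (Matrix.of fun i a => ∑ r, v i r * w a r) - 1))]
    rw [hψ w]
    calc c * Matrix.det (Matrix.of fun i a => ∑ r, v i r * w a r) ≤ c * 1 :=
          mul_le_mul_of_nonneg_left hdet1 hc
      _ = c := mul_one c
  constructor
  · apply le_antisymm
    · have hne : Set.Nonempty {r : ℝ | ∃ w : Fin k → EuclideanSpace ℝ (Fin d),
          Orthonormal ℝ w ∧ r = ψ w} := ⟨c, v, hv, hψv.symm⟩
      apply csSup_le hne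
      rintro r ⟨w, hw, rfl⟩
      exact hub w hw
    · have hbdd : BddAbove {r : ℝ | ∃ w : Fin k → EuclideanSpace ℝ (Fin d),
          Orthonormal ℝ w ∧ r = ψ w} :=
        ⟨c, fun r hr => by obtain ⟨w, hw, rfl⟩ := hr; exact hub w hw⟩
      exact le_csSup hbdd ⟨v, hv, hψv.symm⟩
  · have : ∑ f : Fin k → Fin d, (ψ (fun i => EuclideanSpace.single (f i) 1)) ^ 2
        = c ^ 2 * (Nat.factorial k : ℝ) := by
      simp only [hψe, mul_pow]
      rw [← Finset.mul_sum, hsum v hv]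
    have h2 : (1 / (Nat.factorial k : ℝ)) * (c ^ 2 * (Nat.factorial k : ℝ)) = c ^ 2 := by
      field_simp
    rw [this, h2, Real.sqrt_sq hc]
end
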